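/- The generating function F(q,z) of p-fountains satisfies the functional equation F(q,z) = 1 + qz + ... + (qz)^{p-1} + (qz)^{-p+1} G(q,z) (F(q,z) - 1 - qz - ... - (qz)^{p-2}), where G(q,z) = (qz)^p F(q,qz). -/

import Mathlib

/-- A `p`-fountain: an arrangement of coins in rows. `rows i` is the set of positions of
coins in row `i` (row `0` is the bottom row). The bottom row consists of consecutive coins,
and each coin in a higher row has exactly `p+1` descendant coins immediately below it
(so two horizontally adjacent coins share exactly `p` common descendants). -/
structure Fountain (p : ℕ) where
  rows : ℕ → Finset ℕ
  bottom_consecutive : rows 0 = Finset.range (rows 0).card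
  supported : ∀ i j, j ∈ rows (i + 1) → ∀ d ≤ p, j + d ∈ rows i

namespace Fountain
variable {p : ℕ}

/-- The length of the bottom row. -/
def width (F : Fountain p) : ℕ := (F.rows 0).card

/-- The total number of coins. (For `p ≥ 1` all rows above row `width` are empty.) -/
def coins (F : Fountain p) : ℕ := ∑ i ∈ Finset.range (F.width + 1), (F.rows i).card

/-- A fountain is primitive if its next-to-bottom row is full, i.e. has `width - p` coins
(in particular this requires `width ≥ p`). -/
def Primitive (F : Fountain p) : Prop :=
  p ≤ F.width ∧ F.rows 1 = Finset.range (F.width - p)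

end Fountain

/-- `fcount p n k` = number of `(n,k)` `p`-fountains. -/
noncomputable def fcount (p n k : ℕ) : ℕ :=
  Set.ncard {F : Fountain p | F.coins = n ∧ F.width = k}

/-- `gcount p n k` = number of primitive `(n,k)` `p`-fountains. -/
noncomputable def gcount (p n k : ℕ) : ℕ :=
  Set.ncard {F : Fountain p | F.Primitive ∧ F.coins = n ∧ F.width = k}

/-- `hcount p n k` = number of non-primitive `(n,k)` `p`-fountains. -/
noncomputable def hcount (p n k : ℕ) : ℕ :=
  Set.ncard {F : Fountain p | ¬ F.Primitive ∧ F.coins = n ∧ F.width = k}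

/-- The generating function `F(q,z) = ∑ f(n,k) qⁿ zᵏ`, where `q = X 0`, `z = X 1`. -/
noncomputable def Fgf (p : ℕ) : MvPowerSeries (Fin 2) ℚ :=
  fun d => (fcount p (d 0) (d 1) : ℚ)

/-- The generating function `G(q,z) = ∑ g(n,k) qⁿ zᵏ` of primitive fountains. -/
noncomputable def Ggf (p : ℕ) : MvPowerSeries (Fin 2) ℚ :=
  fun d => (gcount p (d 0) (d 1) : ℚ)

/-- The generating function `H(q,z) = ∑ h(n,k) qⁿ zᵏ` of non-primitive fountains. -/
noncomputable def Hgf (p : ℕ) : MvPowerSeries (Fin 2) ℚ :=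
  fun d => (hcount p (d 0) (d 1) : ℚ)

/-- The substituted series `F(q, qz) = ∑ f(n,k) q^{n+k} z^k`. -/
noncomputable def Fqz (p : ℕ) : MvPowerSeries (Fin 2) ℚ :=
  fun d => if d 1 ≤ d 0 then (fcount p (d 0 - d 1) (d 1) : ℚ) else 0


/-- The series `(qz)^{-p+1} G(q,z)`, well defined since `G` is divisible by `(qz)^{p-1}`. -/
noncomputable def Gshift (p : ℕ) : MvPowerSeries (Fin 2) ℚ :=
  fun d => (gcount p (d 0 + (p - 1)) (d 1 + (p - 1)) : ℚ)


/-!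
Cut a fountain of width `k ≥ p` at the first gap `s` of its second row. No coin higher up
straddles the gap, so the fountain falls apart: the coins on the left, standing on a full
bottom row of `s + p` coins, form a primitive fountain, and the coins on the right form an
arbitrary fountain of width `k - s - 1 ≥ p - 1` whose bottom row shares `p - 1` coins with the
left piece. Conversely any such pair glues back, so `f` is the convolution of `g` shifted by
`(qz)^(p-1)` with `f` restricted to widths `≥ p - 1`, while fountains of width `< p` are bare
rows. Removing the full bottom row of a primitive fountain of width `k` leaves an arbitrary
fountain of width `k - p`, whence `G(q,z) = (qz)^p F(q,qz)`.
-/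

open Finset

theorem preimage_range_add (w t : ℕ) :
    (range w).preimage (· + t) (add_left_injective t).injOn = range (w - t) := by
  ext j
  simp only [mem_preimage, mem_range]
  omega

noncomputable def bideg (a b : ℕ) : Fin 2 →₀ ℕ := Finsupp.single 0 a + Finsupp.single 1 b

@[simp]
theorem bideg_apply_zero (a b : ℕ) : bideg a b 0 = a := by simp [bideg]

@[simp]
theorem bideg_apply_one (a b : ℕ) : bideg a b 1 = b := by simp [bideg]

theorem bideg_eq_iff {a b : ℕ} {d : Fin 2 →₀ ℕ} : bideg a b = d ↔ a = d 0 ∧ b = d 1 := by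
  simp [bideg, Finsupp.ext_iff, Fin.forall_fin_two, eq_comm]

theorem bideg_le_iff {a b : ℕ} {d : Fin 2 →₀ ℕ} : bideg a b ≤ d ↔ a ≤ d 0 ∧ b ≤ d 1 := by
  simp [bideg, Finsupp.le_def, Fin.forall_fin_two]

theorem mem_antidiagonal_fin_two {d : Fin 2 →₀ ℕ} {x : (Fin 2 →₀ ℕ) × (Fin 2 →₀ ℕ)} :
    x ∈ antidiagonal d ↔ x.1 0 + x.2 0 = d 0 ∧ x.1 1 + x.2 1 = d 1 := by
  simp [HasAntidiagonal.mem_antidiagonal, Finsupp.ext_iff, Fin.forall_fin_two]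

namespace Fountain
variable {p : ℕ}

theorem ext_of_rows {F G : Fountain p} (h : F.rows = G.rows) : F = G := by
  cases F; cases G; subst h; rfl

theorem rows_zero_eq_range (F : Fountain p) : F.rows 0 = range F.width :=
  F.bottom_consecutive

theorem card_rows_zero (F : Fountain p) : (F.rows 0).card = F.width := rfl

theorem rows_subset_range (F : Fountain p) (i : ℕ) : F.rows i ⊆ range (F.width - i * p) := by
  induction i with
  | zero => simp [F.rows_zero_eq_range]
  | succ i ih =>
    intro j hj
    have := ih (F.supported i j hj p le_rfl)
    simp only [mem_range, Nat.succ_mul] at this ⊢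
    omega

theorem rows_eq_empty (F : Fountain p) {i : ℕ} (h : F.width ≤ i * p) : F.rows i = ∅ := by
  simpa [Nat.sub_eq_zero_of_le h] using F.rows_subset_range i

theorem sum_card_rows_eq_coins (F : Fountain p) (hp : 1 ≤ p) {N : ℕ} (hN : F.width < N) :
    ∑ i ∈ range N, (F.rows i).card = F.coins := by
  refine (sum_subset (range_subset_range.2 hN) fun i hi hi' => ?_).symm
  simp only [mem_range, not_lt] at hi hi'
  rw [F.rows_eq_empty (by nlinarith), card_empty]

theorem width_le_coins (F : Fountain p) : F.width ≤ F.coins :=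
  single_le_sum (f := fun i => (F.rows i).card) (fun _ _ => Nat.zero_le _)
    (mem_range.2 F.width.succ_pos)

theorem finite_setOf_width_eq (hp : 1 ≤ p) (k : ℕ) : {F : Fountain p | F.width = k}.Finite := by
  refine Set.Finite.of_finite_image (f := fun F (i : Fin (k + 1)) => F.rows i) ?_ ?_
  · refine (Set.Finite.pi' fun _ => Set.finite_Iic (range k)).subset ?_
    rintro _ ⟨F, rfl, rfl⟩ i
    exact (F.rows_subset_range i).trans (range_subset_range.2 (Nat.sub_le _ _))
  · intro F hF G hG h
    refine ext_of_rows (funext fun i => ?_)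
    by_cases hi : i ≤ k
    · exact congrFun h ⟨i, Nat.lt_succ_of_le hi⟩
    · have : k ≤ i * p := by nlinarith
      rw [F.rows_eq_empty (hF ▸ this), G.rows_eq_empty (hG ▸ this)]

def flat (p k : ℕ) : Fountain p where
  rows
    | 0 => range k
    | _ + 1 => ∅
  bottom_consecutive := by simp
  supported _ _ hj := by simp at hj

theorem flat_width (k : ℕ) : (flat p k).width = k := by simp [width, flat]

theorem flat_coins (k : ℕ) : (flat p k).coins = k := by
  simp [coins, sum_range_succ', flat]

theorem eq_flat (F : Fountain p) (hw : F.width ≤ p) : F = flat p F.width := by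
  refine ext_of_rows (funext fun i => ?_)
  cases i with
  | zero => exact F.rows_zero_eq_range
  | succ i => exact F.rows_eq_empty (hw.trans (Nat.le_mul_of_pos_left p i.succ_pos))

theorem coins_eq_width (F : Fountain p) (hw : F.width ≤ p) : F.coins = F.width :=
  calc F.coins = (flat p F.width).coins := congrArg coins (F.eq_flat hw)
    _ = F.width := flat_coins _

def addBase (R : Fountain p) : Fountain p where
  rows
    | 0 => range (R.width + p)
    | i + 1 => R.rows i
  bottom_consecutive := by simp
  supported
    | 0, j, (hj : j ∈ R.rows 0), d, hd => by
      rw [R.rows_zero_eq_range, mem_range] at hj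
      exact mem_range.2 (by omega)
    | i + 1, j, hj, d, hd => R.supported i j hj d hd

def removeBase (F : Fountain p) (hF : F.Primitive) : Fountain p where
  rows i := F.rows (i + 1)
  bottom_consecutive := by rw [hF.2, card_range]
  supported i := F.supported (i + 1)

theorem addBase_width (R : Fountain p) : R.addBase.width = R.width + p := by
  simp [width, addBase]

theorem removeBase_width (F : Fountain p) (hF : F.Primitive) :
    (F.removeBase hF).width = F.width - p := by
  simp [width, removeBase, hF.2]

theorem coins_addBase (R : Fountain p) (hp : 1 ≤ p) :
    R.addBase.coins = R.coins + (R.width + p) := by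
  rw [← R.addBase.sum_card_rows_eq_coins hp (N := R.width + p + 1) (by rw [addBase_width]; omega),
    ← R.sum_card_rows_eq_coins hp (N := R.width + p) (by omega), sum_range_succ']
  simp [addBase]

theorem addBase_primitive (R : Fountain p) : R.addBase.Primitive := by
  refine ⟨by rw [addBase_width]; omega, ?_⟩
  change R.rows 0 = _
  rw [addBase_width, Nat.add_sub_cancel, R.rows_zero_eq_range]

theorem addBase_injective : Function.Injective (addBase (p := p)) := fun _ _ h =>
  ext_of_rows (funext fun i => congrFun (congrArg rows h) (i + 1))

theorem addBase_removeBase (F : Fountain p) (hF : F.Primitive) : (F.removeBase hF).addBase = F := by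
  refine ext_of_rows (funext fun i => ?_)
  cases i with
  | zero =>
    change range ((F.removeBase hF).width + p) = F.rows 0
    rw [removeBase_width, Nat.sub_add_cancel hF.1, F.rows_zero_eq_range]
  | succ i => rfl

def firstGap (F : Fountain p) : ℕ :=
  Nat.find (Infinite.exists_notMem_finset (F.rows 1))

theorem firstGap_notMem (F : Fountain p) : F.firstGap ∉ F.rows 1 :=
  Nat.find_spec (Infinite.exists_notMem_finset (F.rows 1))

theorem mem_rows_one_of_lt_firstGap (F : Fountain p) {j : ℕ} (hj : j < F.firstGap) :
    j ∈ F.rows 1 :=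
  not_not.1 (Nat.find_min _ hj)

theorem firstGap_le (F : Fountain p) : F.firstGap ≤ F.width - p := by
  refine Nat.find_min' _ fun h => ?_
  simpa using F.rows_subset_range 1 h

theorem firstGap_eq {F : Fountain p} {s : ℕ} (hs : s ∉ F.rows 1)
    (hlt : ∀ j < s, j ∈ F.rows 1) : F.firstGap = s :=
  (Nat.find_eq_iff _).2 ⟨hs, fun j hj => not_not.2 (hlt j hj)⟩

/-- A gap at position `s` of row `1` splits every higher row: a coin of row `i + 1` lying
over the gap would force a coin at position `s` in row `i`. -/
theorem lt_or_lt_of_notMem_rows_one (F : Fountain p) {s : ℕ} (hs : s ∉ F.rows 1) (i : ℕ) :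
    ∀ j ∈ F.rows (i + 1), j + i * p < s ∨ s < j := by
  induction i with
  | zero =>
    intro j hj
    have : j ≠ s := fun h => hs (h ▸ hj)
    omega
  | succ i ih =>
    intro j hj
    rcases ih (j + p) (F.supported _ j hj p le_rfl) with h | h
    · left
      rw [Nat.succ_mul]
      omega
    · by_contra hjs
      have hs' : s ∈ F.rows (i + 1) := by
        simpa [show j + (s - j) = s by omega] using F.supported _ j hj (s - j) (by omega)
      rcases ih s hs' with h' | h' <;> omega

def left (F : Fountain p) (s : ℕ) : Fountain p where
  rows
    | 0 => range (s + p)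
    | i + 1 => (F.rows (i + 1)).filter (· + i * p < s)
  bottom_consecutive := by simp
  supported
    | 0, j, hj, d, hd => by
      simp only [mem_filter, zero_mul, add_zero] at hj
      exact mem_range.2 (by omega)
    | i + 1, j, hj, d, hd => by
      simp only [mem_filter, Nat.succ_mul] at hj ⊢
      exact ⟨F.supported _ j hj.1 d hd, by omega⟩

noncomputable def right (F : Fountain p) (s : ℕ) : Fountain p where
  rows i := (F.rows i).preimage (· + (s + 1)) (add_left_injective _).injOn
  bottom_consecutive := by
    simp only [F.rows_zero_eq_range, preimage_range_add, card_range]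
  supported i j hj d hd := by
    simp only [mem_preimage] at hj ⊢
    simpa [add_right_comm] using F.supported i _ hj d hd

/-- `L` next to a copy of `R` shifted past a gap at position `s` of row `1`. When
`L.width = s + p`, the last `p - 1` bottom coins of `L` are the first ones of `R`; the `max`
only makes the definition total. -/
def glue (s : ℕ) (L R : Fountain p) : Fountain p where
  rows
    | 0 => range (max L.width (s + 1 + R.width))
    | i + 1 => L.rows (i + 1) ∪ (R.rows (i + 1)).image (· + (s + 1))
  bottom_consecutive := by simp
  supported
    | 0, j, hj, d, hd => by
      simp only [mem_union, mem_image] at hj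
      refine mem_range.2 ?_
      rcases hj with hj | ⟨x, hx, rfl⟩
      · have := L.rows_zero_eq_range ▸ L.supported 0 j hj d hd
        rw [mem_range] at this
        omega
      · have := R.rows_zero_eq_range ▸ R.supported 0 x hx d hd
        rw [mem_range] at this
        omega
    | i + 1, j, hj, d, hd => by
      simp only [mem_union, mem_image] at hj ⊢
      rcases hj with hj | ⟨x, hx, rfl⟩
      · exact .inl (L.supported _ j hj d hd)
      · exact .inr ⟨x + d, R.supported _ x hx d hd, by ring⟩

theorem left_width (F : Fountain p) (s : ℕ) : (F.left s).width = s + p := by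
  simp [width, left]

theorem right_width (F : Fountain p) (s : ℕ) : (F.right s).width = F.width - (s + 1) := by
  change ((F.rows 0).preimage (· + (s + 1)) (add_left_injective _).injOn).card = _
  rw [F.rows_zero_eq_range, preimage_range_add, card_range]

theorem glue_width {s : ℕ} {L R : Fountain p} (h : L.width ≤ s + 1 + R.width) :
    (glue s L R).width = s + 1 + R.width := by
  change (range _).card = _
  rw [card_range, max_eq_right h]

theorem glue_left_right (hp : 1 ≤ p) {F : Fountain p} {s : ℕ} (hs : s ∉ F.rows 1)
    (hsw : s + p ≤ F.width) : glue s (F.left s) (F.right s) = F := by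
  refine ext_of_rows (funext fun i => ?_)
  cases i with
  | zero =>
    change range (max _ _) = _
    rw [left_width, right_width, F.rows_zero_eq_range]
    congr 1
    omega
  | succ i =>
    ext j
    simp only [glue, left, right, mem_union, mem_filter, mem_image, mem_preimage]
    constructor
    · rintro (⟨hj, -⟩ | ⟨x, hx, rfl⟩) <;> assumption
    · intro hj
      rcases F.lt_or_lt_of_notMem_rows_one hs i j hj with h | h
      · exact .inl ⟨hj, h⟩
      · exact .inr ⟨j - (s + 1), by rwa [Nat.sub_add_cancel h], Nat.sub_add_cancel h⟩

theorem left_glue {s : ℕ} {L : Fountain p} (R : Fountain p) (hL : L.width = s + p) :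
    (glue s L R).left s = L := by
  refine ext_of_rows (funext fun i => ?_)
  cases i with
  | zero => exact (hL ▸ L.rows_zero_eq_range).symm
  | succ i =>
    ext j
    simp only [glue, left, mem_filter, mem_union, mem_image]
    refine ⟨fun ⟨hj, hlt⟩ => hj.resolve_right ?_, fun hj => ⟨.inl hj, ?_⟩⟩
    · rintro ⟨x, -, rfl⟩
      omega
    · have := mem_range.1 (L.rows_subset_range _ hj)
      rw [Nat.succ_mul] at this
      omega

theorem right_glue {s : ℕ} {L R : Fountain p} (hL : L.width = s + p) (hR : p ≤ R.width + 1) :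
    (glue s L R).right s = R := by
  refine ext_of_rows (funext fun i => ?_)
  cases i with
  | zero =>
    change (range (max L.width (s + 1 + R.width))).preimage (· + (s + 1))
      (add_left_injective _).injOn = _
    rw [preimage_range_add, R.rows_zero_eq_range]
    congr 1
    omega
  | succ i =>
    ext j
    simp only [glue, right, mem_preimage, mem_union, mem_image, add_left_inj, exists_eq_right]
    refine or_iff_right fun hj => ?_
    have := mem_range.1 (L.rows_subset_range _ hj)
    rw [Nat.succ_mul] at this
    omega

theorem coins_glue (hp : 1 ≤ p) {s : ℕ} {L R : Fountain p} (hL : L.width = s + p)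
    (hR : p ≤ R.width + 1) : (glue s L R).coins + (p - 1) = L.coins + R.coins := by
  have hGw : (glue s L R).width = s + 1 + R.width := glue_width (by omega)
  have hrow : ∀ i, ((glue s L R).rows (i + 1)).card =
      (L.rows (i + 1)).card + (R.rows (i + 1)).card := by
    intro i
    refine (card_union_of_disjoint (disjoint_left.2 fun j hjL hjR => ?_)).trans
      (congrArg _ (card_image_of_injective _ (add_left_injective _)))
    obtain ⟨x, -, rfl⟩ := mem_image.1 hjR
    have := mem_range.1 (L.rows_subset_range _ hjL)
    rw [Nat.succ_mul] at this
    omega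
  rw [← (glue s L R).sum_card_rows_eq_coins hp (N := s + 1 + R.width + 1) (by omega),
    ← L.sum_card_rows_eq_coins hp (N := s + 1 + R.width + 1) (by omega),
    ← R.sum_card_rows_eq_coins hp (N := s + 1 + R.width + 1) (by omega),
    sum_range_succ', sum_range_succ', sum_range_succ', sum_congr rfl fun i _ => hrow i,
    sum_add_distrib, card_rows_zero, card_rows_zero, card_rows_zero, hGw, hL]
  omega

theorem firstGap_glue {s : ℕ} {L : Fountain p} (R : Fountain p) (hP : L.Primitive)
    (hL : L.width = s + p) : (glue s L R).firstGap = s := by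
  have hL1 : L.rows 1 = range s := by rw [hP.2, hL, Nat.add_sub_cancel]
  refine firstGap_eq ?_ fun j hj => mem_union_left _ (hL1 ▸ mem_range.2 hj)
  simp only [glue, hL1, mem_union, mem_range, mem_image, not_or, not_exists, not_and]
  exact ⟨lt_irrefl s, fun x _ => by omega⟩

theorem left_primitive {F : Fountain p} {s : ℕ} (h : ∀ j < s, j ∈ F.rows 1) :
    (F.left s).Primitive := by
  refine ⟨by rw [left_width]; omega, ?_⟩
  rw [left_width, Nat.add_sub_cancel]
  ext j
  simp only [left, mem_filter, mem_range, zero_mul, add_zero]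
  exact ⟨And.right, fun hj => ⟨h j hj, hj⟩⟩

theorem coins_left_add_coins_right (hp : 1 ≤ p) {F : Fountain p} {s : ℕ} (hs : s ∉ F.rows 1)
    (hsw : s + p ≤ F.width) : (F.left s).coins + (F.right s).coins = F.coins + (p - 1) := by
  have := coins_glue hp (R := F.right s) (F.left_width s) (by rw [right_width]; omega)
  rw [glue_left_right hp hs hsw] at this
  exact this.symm

/-- The bidegrees of the two pieces of `F` cut at its first gap, the first one divided by
`(qz)^(p-1)` to match `Gshift`. -/
noncomputable def splitDegrees (F : Fountain p) : (Fin 2 →₀ ℕ) × (Fin 2 →₀ ℕ) :=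
  (bideg ((F.left F.firstGap).coins - (p - 1)) (F.firstGap + 1),
    bideg (F.right F.firstGap).coins (F.right F.firstGap).width)

theorem splitDegrees_eq_iff (hp : 1 ≤ p) {F : Fountain p} (hF : p ≤ F.width)
    {x : (Fin 2 →₀ ℕ) × (Fin 2 →₀ ℕ)} (hx₀ : x.1 0 + x.2 0 = F.coins)
    (hx₁ : x.1 1 + x.2 1 = F.width) :
    F.splitDegrees = x ↔
      F.firstGap + 1 = x.1 1 ∧ (F.left F.firstGap).coins = x.1 0 + (p - 1) := by
  have hgap := F.firstGap_le
  have hsplit := coins_left_add_coins_right hp F.firstGap_notMem (by omega)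
  have hleft := (F.left F.firstGap).width_le_coins
  rw [left_width] at hleft
  rw [splitDegrees, Prod.ext_iff, bideg_eq_iff, bideg_eq_iff, right_width]
  omega

theorem splitDegrees_mem_antidiagonal (hp : 1 ≤ p) {F : Fountain p} {d : Fin 2 →₀ ℕ}
    (hc : F.coins = d 0) (hw : F.width = d 1) (hF : p ≤ F.width) :
    F.splitDegrees ∈ antidiagonal d := by
  have hgap := F.firstGap_le
  have hsplit := coins_left_add_coins_right hp F.firstGap_notMem (by omega)
  have hleft := (F.left F.firstGap).width_le_coins
  rw [left_width] at hleft
  rw [mem_antidiagonal_fin_two, splitDegrees]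
  simp only [bideg_apply_zero, bideg_apply_one, right_width]
  omega

end Fountain

open Fountain

theorem fcount_of_width_le {p n k : ℕ} (hk : k ≤ p) : fcount p n k = if n = k then 1 else 0 := by
  have hset : {F : Fountain p | F.coins = n ∧ F.width = k} = if n = k then {flat p k} else ∅ := by
    ext F
    split_ifs with h
    · subst h
      refine ⟨fun ⟨_, hw⟩ => hw ▸ F.eq_flat (hw ▸ hk), ?_⟩
      rintro rfl
      exact ⟨flat_coins n, flat_width n⟩
    · refine iff_of_false (fun ⟨hc, hw⟩ => h ?_) id
      rw [← hc, ← hw, F.coins_eq_width (hw ▸ hk)]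
  rw [fcount, hset]
  split_ifs <;> simp

theorem gcount_eq_zero {p n k : ℕ} (h : k < p ∨ n < k) : gcount p n k = 0 := by
  have hset : {F : Fountain p | F.Primitive ∧ F.coins = n ∧ F.width = k} = ∅ := by
    refine Set.eq_empty_of_forall_notMem ?_
    rintro F ⟨⟨hpw, -⟩, rfl, rfl⟩
    have := F.width_le_coins
    omega
  rw [gcount, hset, Set.ncard_empty]

theorem gcount_eq_fcount {p n k : ℕ} (hp : 1 ≤ p) (hpk : p ≤ k) (hkn : k ≤ n) :
    gcount p n k = fcount p (n - k) (k - p) := by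
  refine (Set.ncard_congr (fun R _ => R.addBase) ?_ (fun _ _ _ _ h => addBase_injective h) ?_).symm
  · rintro R ⟨hc, hw⟩
    refine ⟨R.addBase_primitive, ?_, ?_⟩
    · rw [R.coins_addBase hp]
      omega
    · rw [addBase_width]
      omega
  · rintro F ⟨hF, hc, hw⟩
    have hcoins := (F.removeBase hF).coins_addBase hp
    rw [addBase_removeBase, removeBase_width] at hcoins
    refine ⟨F.removeBase hF, ⟨?_, ?_⟩, F.addBase_removeBase hF⟩
    · omega
    · rw [removeBase_width]
      omega

theorem ncard_setOf_firstGap_eq {p n k s a b w : ℕ} (hp : 1 ≤ p) (hn : a + b = n)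
    (hk : s + 1 + w = k) (hw : p ≤ w + 1) :
    {F : Fountain p | F.coins = n ∧ F.width = k ∧ F.firstGap = s ∧
        (F.left F.firstGap).coins = a + (p - 1)}.ncard
      = gcount p (a + (p - 1)) (s + p) * fcount p b w := by
  rw [gcount, fcount, ← Set.ncard_prod]
  refine (Set.ncard_congr (fun LR _ => glue s LR.1 LR.2) ?_ ?_ ?_).symm
  · rintro ⟨L, R⟩ ⟨⟨hP, hLc, hLw⟩, hRc, hRw⟩
    dsimp only at hP hLc hLw hRc hRw ⊢
    have hc := coins_glue hp (R := R) hLw (by omega)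
    have hs := firstGap_glue R hP hLw
    refine ⟨by omega, by rw [glue_width (by omega)]; omega, hs, ?_⟩
    rw [hs, left_glue R hLw, hLc]
  · rintro ⟨L, R⟩ ⟨L', R'⟩ ⟨⟨-, -, hLw⟩, -, hRw⟩ ⟨⟨-, -, hLw'⟩, -, hRw'⟩ h
    dsimp only at hLw hRw hLw' hRw' h
    exact Prod.ext (by rw [← left_glue R hLw, h, left_glue R' hLw'])
      (by rw [← right_glue (R := R) hLw (by omega), h, right_glue hLw' (by omega)])
  · rintro F ⟨hc, hw, rfl, hlc⟩
    have hsplit := coins_left_add_coins_right hp F.firstGap_notMem (by omega)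
    refine ⟨(F.left F.firstGap, F.right F.firstGap), Set.mk_mem_prod ?_ ?_,
      glue_left_right hp F.firstGap_notMem (by omega)⟩
    · exact ⟨left_primitive fun j => F.mem_rows_one_of_lt_firstGap, hlc, left_width _ _⟩
    · exact ⟨by omega, by rw [right_width]; omega⟩

theorem ncard_setOf_firstGap_add_one_eq {p n k a₀ a₁ b₀ b₁ : ℕ} (hp : 1 ≤ p) (hn : a₀ + b₀ = n)
    (hk : a₁ + b₁ = k) (hpk : p ≤ k) :
    {F : Fountain p | F.coins = n ∧ F.width = k ∧ F.firstGap + 1 = a₁ ∧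
        (F.left F.firstGap).coins = a₀ + (p - 1)}.ncard
      = gcount p (a₀ + (p - 1)) (a₁ + (p - 1)) * if p - 1 ≤ b₁ then fcount p b₀ b₁ else 0 := by
  by_cases hb : p - 1 ≤ b₁
  · rcases a₁ with _ | s
    · rw [gcount_eq_zero (.inl (by omega)), zero_mul]
      simp
    · rw [if_pos hb, show s + 1 + (p - 1) = s + p by omega]
      simp only [add_left_inj]
      exact ncard_setOf_firstGap_eq hp hn (by omega) (by omega)
  · rw [if_neg hb, mul_zero]
    convert Set.ncard_empty (Fountain p)
    refine Set.eq_empty_of_forall_notMem fun F ⟨_, hw, hs, _⟩ => ?_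
    have := F.firstGap_le
    omega

theorem fcount_eq_sum_antidiagonal {p : ℕ} (hp : 1 ≤ p) {d : Fin 2 →₀ ℕ} (hd : p ≤ d 1) :
    fcount p (d 0) (d 1) = ∑ x ∈ antidiagonal d, gcount p (x.1 0 + (p - 1)) (x.1 1 + (p - 1)) *
      if p - 1 ≤ x.2 1 then fcount p (x.2 0) (x.2 1) else 0 := by
  classical
  have hS : {F : Fountain p | F.coins = d 0 ∧ F.width = d 1}.Finite :=
    (finite_setOf_width_eq hp (d 1)).subset fun F hF => hF.2
  have hmaps : ∀ F ∈ hS.toFinset, F.splitDegrees ∈ antidiagonal d := fun F hF => by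
    obtain ⟨hc, hw⟩ := hS.mem_toFinset.1 hF
    exact splitDegrees_mem_antidiagonal hp hc hw (hw ▸ hd)
  rw [fcount, Set.ncard_eq_toFinset_card _ hS, card_eq_sum_card_fiberwise hmaps]
  refine sum_congr rfl fun x hx => ?_
  obtain ⟨hx₀, hx₁⟩ := mem_antidiagonal_fin_two.1 hx
  rw [← ncard_setOf_firstGap_add_one_eq hp hx₀ hx₁ hd, ← Set.ncard_coe_finset]
  congr 1
  ext F
  simp only [coe_filter, Set.Finite.mem_toFinset, Set.mem_ofPred_eq]
  refine ⟨fun ⟨⟨hc, hw⟩, h⟩ => ?_, fun ⟨hc, hw, h⟩ => ⟨⟨hc, hw⟩, ?_⟩⟩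
  · exact ⟨hc, hw, (splitDegrees_eq_iff hp (hw ▸ hd) (by omega) (by omega)).1 h⟩
  · exact (splitDegrees_eq_iff hp (hw ▸ hd) (by omega) (by omega)).2 h

open MvPowerSeries

section QZ
variable {R : Type*} [CommSemiring R]

theorem qz_pow_eq_monomial (m : ℕ) :
    (X 0 * X 1 : MvPowerSeries (Fin 2) R) ^ m = monomial (bideg m m) 1 := by
  rw [mul_pow, X_pow_eq, X_pow_eq, monomial_mul_monomial, one_mul]
  rfl

theorem coeff_qz_pow_mul (m : ℕ) (φ : MvPowerSeries (Fin 2) R) (d : Fin 2 →₀ ℕ) :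
    coeff d ((X 0 * X 1) ^ m * φ) =
      if m ≤ d 0 ∧ m ≤ d 1 then coeff (bideg (d 0 - m) (d 1 - m)) φ else 0 := by
  have hsub : d - bideg m m = bideg (d 0 - m) (d 1 - m) := by
    ext i
    fin_cases i <;> simp
  rw [qz_pow_eq_monomial, coeff_monomial_mul, one_mul, hsub]
  simp only [bideg_le_iff]

theorem coeff_sum_qz_pow (m : ℕ) (d : Fin 2 →₀ ℕ) :
    coeff d (∑ i ∈ range m, (X 0 * X 1 : MvPowerSeries (Fin 2) R) ^ i) =
      if d 0 = d 1 ∧ d 0 < m then 1 else 0 := by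
  simp only [map_sum, qz_pow_eq_monomial, coeff_monomial, eq_comm (a := d), bideg_eq_iff, ite_and,
    sum_ite_eq', mem_range]
  split_ifs <;> tauto

end QZ

section Coefficients
variable (p : ℕ) (d : Fin 2 →₀ ℕ)

@[simp]
theorem coeff_Fgf : coeff d (Fgf p) = fcount p (d 0) (d 1) := rfl

@[simp]
theorem coeff_Ggf : coeff d (Ggf p) = gcount p (d 0) (d 1) := rfl

@[simp]
theorem coeff_Fqz : coeff d (Fqz p) = if d 1 ≤ d 0 then (fcount p (d 0 - d 1) (d 1) : ℚ) else 0 :=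
  rfl

@[simp]
theorem coeff_Gshift : coeff d (Gshift p) = gcount p (d 0 + (p - 1)) (d 1 + (p - 1)) := rfl

end Coefficients

theorem coeff_Fgf_sub_sum_qz_pow (p : ℕ) (d : Fin 2 →₀ ℕ) :
    coeff d (Fgf p - ∑ i ∈ range (p - 1), (X 0 * X 1) ^ i) =
      if p - 1 ≤ d 1 then (fcount p (d 0) (d 1) : ℚ) else 0 := by
  rw [map_sub, coeff_sum_qz_pow, coeff_Fgf]
  by_cases h : p - 1 ≤ d 1
  · rw [if_neg (by omega), if_pos h, sub_zero]
  · rw [if_neg h, fcount_of_width_le (by omega)]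
    by_cases h' : d 0 = d 1
    · rw [if_pos h', if_pos ⟨h', by omega⟩, Nat.cast_one, sub_self]
    · rw [if_neg h', if_neg (by tauto), Nat.cast_zero, sub_zero]

theorem Ggf_eq_qz_pow_mul_Gshift (p : ℕ) :
    Ggf p = (X 0 * X 1) ^ (p - 1) * Gshift p := by
  ext d
  rw [coeff_qz_pow_mul, coeff_Ggf]
  split_ifs with h
  · rw [coeff_Gshift, bideg_apply_zero, bideg_apply_one, Nat.sub_add_cancel h.1,
      Nat.sub_add_cancel h.2]
  · rw [gcount_eq_zero (by omega), Nat.cast_zero]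

theorem Ggf_eq_qz_pow_mul_Fqz {p : ℕ} (hp : 1 ≤ p) :
    Ggf p = (X 0 * X 1) ^ p * Fqz p := by
  ext d
  rw [coeff_qz_pow_mul, coeff_Ggf]
  split_ifs with h
  · rw [coeff_Fqz, bideg_apply_zero, bideg_apply_one]
    split_ifs with h'
    · rw [gcount_eq_fcount hp h.2 (by omega), show d 0 - p - (d 1 - p) = d 0 - d 1 by omega]
    · rw [gcount_eq_zero (by omega), Nat.cast_zero]
  · rw [gcount_eq_zero (by omega), Nat.cast_zero]

theorem Fgf_eq_sum_add_Gshift_mul {p : ℕ} (hp : 1 ≤ p) :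
    Fgf p = (∑ i ∈ range p, (X 0 * X 1) ^ i) +
      Gshift p * (Fgf p - ∑ i ∈ range (p - 1), (X 0 * X 1) ^ i) := by
  ext d
  simp only [map_add, coeff_sum_qz_pow, coeff_mul, coeff_Fgf_sub_sum_qz_pow, coeff_Fgf,
    coeff_Gshift]
  rcases le_or_gt p (d 1) with hd | hd
  · rw [if_neg (by omega), zero_add, fcount_eq_sum_antidiagonal hp hd]
    push_cast
    rfl
  · rw [fcount_of_width_le hd.le, sum_eq_zero fun x hx => ?_, add_zero]
    · by_cases h : d 0 = d 1
      · rw [if_pos h, if_pos ⟨h, by omega⟩, Nat.cast_one]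
      · rw [if_neg h, if_neg (by tauto), Nat.cast_zero]
    · obtain ⟨hx₀, hx₁⟩ := mem_antidiagonal_fin_two.1 hx
      by_cases h : p - 1 ≤ x.2 1
      · rw [gcount_eq_zero (.inl (by omega)), Nat.cast_zero, zero_mul]
      · rw [if_neg h, mul_zero]

open MvPowerSeries in
/-- The functional equation
`F(q,z) = 1 + qz + ⋯ + (qz)^{p-1} + (qz)^{-p+1} G(q,z) (F(q,z) - 1 - qz - ⋯ - (qz)^{p-2})`,
where `G(q,z) = (qz)^p F(q,qz)`. Here `Gshift p` is the series `(qz)^{-p+1} G(q,z)`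
(the first conjunct states this) and `Fqz p` is `F(q,qz)`. -/
theorem fountain_functional_equation (p : ℕ) (hp : 1 ≤ p) :
    Ggf p = (X 0 * X 1) ^ (p - 1) * Gshift p ∧
    Ggf p = (X 0 * X 1) ^ p * Fqz p ∧
    Fgf p = (∑ i ∈ Finset.range p, (X 0 * X 1) ^ i) +
      Gshift p * (Fgf p - ∑ i ∈ Finset.range (p - 1), (X 0 * X 1) ^ i) :=
  ⟨Ggf_eq_qz_pow_mul_Gshift p, Ggf_eq_qz_pow_mul_Fqz hp, Fgf_eq_sum_add_Gshift_mul hp⟩
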